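/- (Acceptable coloring / Proposition 3) Let L be a finite set of lines in ℝ^n with joint set J. Then there exists a function c : J → L with x ∈ c(x) for all x ∈ J, such that for every line ℓ ∈ L, the number of joints x ∈ ℓ ∩ J with c(x) = ℓ is at most K·|J|^(1/n), where K depends only on n. -/

import Mathlib

/-!
Polynomial method. If `#J < (k + 1) ^ n`, a parameter count gives a nonzero polynomial of
degree at most `n * k` vanishing on `J`. Suppose every line of `L` met `J` in more than `n * k`
points. Then, by induction on the degree, no nonzero polynomial `q` of degree at most `n * k`
vanishes on `J`: `q` vanishes on every line of `L`, so its gradient vanishes at every joint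
(the directions there span `ℝⁿ`), so its partial derivatives, of smaller degree, vanish on `J`
and are zero, leaving a constant. Hence some line `ℓ ∈ L` carries at most `n * #J ^ (1 / n)`
points of `J`: colour them by `ℓ`, delete `ℓ` and recurse. For `n ≥ 2` the set of joints is
finite, as two lines with independent directions meet at most once.
-/

open MvPolynomial

/-- A line in ℝⁿ, given by a base point and a nonzero direction vector. -/
structure Line (n : ℕ) where
  p : Fin n → ℝ
  v : Fin n → ℝ
  hv : v ≠ 0

/-- The set of points of a line. -/
def Line.carrier {n : ℕ} (ℓ : Line n) : Set (Fin n → ℝ) :=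
  {x | ∃ t : ℝ, x = ℓ.p + t • ℓ.v}

/-- `x` is a joint of the collection of lines `L`: it lies on `n` lines of `L`
whose directions are linearly independent. -/
def IsJoint {n : ℕ} (L : Finset (Line n)) (x : Fin n → ℝ) : Prop :=
  ∃ f : Fin n → Line n, (∀ i, f i ∈ L) ∧ (∀ i, x ∈ (f i).carrier) ∧
    LinearIndependent ℝ (fun i => (f i).v)

/-- The set of joints of `L`. -/
def joints {n : ℕ} (L : Finset (Line n)) : Set (Fin n → ℝ) :=
  {x | IsJoint L x}

open Finset Polynomial

namespace MvPolynomial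

variable {σ K : Type*}

theorem exists_ne_zero_totalDegree_le_of_card_lt [Field K] [Fintype σ] (S : Finset (σ → K))
    (k : ℕ) (hS : #S < (k + 1) ^ Fintype.card σ) :
    ∃ q : MvPolynomial σ K, q ≠ 0 ∧ (∀ x ∈ S, eval x q = 0) ∧
      q.totalDegree ≤ Fintype.card σ * k := by
  classical
  let mono : (σ → Fin (k + 1)) → MvPolynomial σ K := fun α =>
    monomial (Finsupp.equivFunOnFinite.symm fun i => (α i : ℕ)) 1
  let ev : MvPolynomial σ K →ₗ[K] S → K := LinearMap.pi fun x => (aeval x.1).toLinearMap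
  have hmono : LinearIndependent K mono :=
    (basisMonomials σ K).linearIndependent.comp _ fun α β h => by
      funext i
      simpa [Fin.ext_iff, mono] using DFunLike.congr_fun h i
  have hev : ¬ LinearIndependent K (ev ∘ mono) := fun h => by
    have := h.fintype_card_le_finrank
    simp only [Fintype.card_fun, Fintype.card_fin, Module.finrank_fintype_fun_eq_card,
      Fintype.card_coe] at this
    omega
  obtain ⟨q, hq_span, hq_ker, hq0⟩ :
      ∃ q ∈ Submodule.span K (Set.range mono), q ∈ LinearMap.ker ev ∧ q ≠ 0 := by
    by_contra! h
    exact hev (hmono.map (Submodule.disjoint_def.2 h))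
  refine ⟨q, hq0, fun x hx => congrFun hq_ker ⟨x, hx⟩, ?_⟩
  suffices Submodule.span K (Set.range mono) ≤ restrictTotalDegree σ K (Fintype.card σ * k) from
    (mem_restrictTotalDegree _ _ _).1 (this hq_span)
  refine Submodule.span_le.2 (Set.range_subset_iff.2 fun α => ?_)
  refine (mem_restrictTotalDegree _ _ _).2 ((totalDegree_monomial_le _ _).trans ?_)
  rw [Finsupp.sum_fintype _ _ (fun _ => rfl)]
  simpa using Finset.sum_le_card_nsmul univ (fun i => (α i : ℕ)) k
    (fun i _ => Nat.lt_succ_iff.1 (α i).2)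

theorem totalDegree_pderiv_lt [CommSemiring K] {q : MvPolynomial σ K} {i : σ}
    (h : pderiv i q ≠ 0) : (pderiv i q).totalDegree < q.totalDegree := by
  have key : ∀ m ∈ (pderiv i q).support, (m.sum fun _ e => e) < q.totalDegree := by
    intro m hm
    rw [mem_support_iff, coeff_pderiv] at hm
    refine lt_of_lt_of_le ?_ (le_totalDegree (mem_support_iff.2 (left_ne_zero_of_mul hm)))
    rw [Finsupp.sum_add_index' (fun _ => rfl) (fun _ _ _ => rfl), Finsupp.sum_single_index rfl]
    omega
  obtain ⟨m, hm⟩ := support_nonempty.2 h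
  exact (Finset.sup_lt_iff (Nat.bot_eq_zero ▸ (Nat.zero_le _).trans_lt (key m hm))).2 key

theorem totalDegree_eq_zero_of_forall_pderiv_eq_zero [CommSemiring K] [NoZeroDivisors K]
    [CharZero K] {q : MvPolynomial σ K} (h : ∀ i, pderiv i q = 0) : q.totalDegree = 0 := by
  refine (totalDegree_eq_zero_iff σ q).2 fun m hm i => ?_
  by_contra hmi
  have hcoeff := coeff_pderiv (i := i) q (m - Finsupp.single i 1)
  rw [h i, coeff_zero, tsub_add_cancel_of_le
    (Finsupp.single_le_iff.2 (Nat.one_le_iff_ne_zero.2 hmi))] at hcoeff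
  exact mem_support_iff.1 hm
    ((mul_eq_zero.1 hcoeff.symm).resolve_right (Nat.cast_add_one_ne_zero _))

theorem derivative_aeval [CommSemiring K] [Fintype σ] (g : σ → K[X]) (q : MvPolynomial σ K) :
    derivative (aeval g q) = ∑ i, aeval g (pderiv i q) * derivative (g i) := by
  classical
  induction q using MvPolynomial.induction_on with
  | C a => simp
  | add p q hp hq => simp only [map_add, hp, hq, add_mul, Finset.sum_add_distrib]
  | mul_X p i hp =>
    simp only [map_mul, aeval_X, derivative_mul, hp, pderiv_mul, map_add, pderiv_X, add_mul,
      Finset.sum_add_distrib, Finset.sum_mul]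
    simp [Pi.single_apply, mul_right_comm]

/-- The restriction of `q` to the line `t ↦ p + t • v`, as a univariate polynomial in `t`. -/
noncomputable def restrictLine [CommSemiring K] (q : MvPolynomial σ K) (p v : σ → K) : K[X] :=
  aeval (fun i => Polynomial.C (v i) * Polynomial.X + Polynomial.C (p i)) q

variable [CommRing K] (q : MvPolynomial σ K) (p v : σ → K)

theorem eval_restrictLine (t : K) : (q.restrictLine p v).eval t = eval (p + t • v) q := by
  rw [restrictLine, ← Polynomial.coe_aeval_eq_eval, comp_aeval_apply, aeval_eq_eval]
  congr 2
  funext i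
  simp only [Polynomial.aeval_add, Polynomial.aeval_mul, Polynomial.aeval_C, Polynomial.aeval_X,
    Pi.add_apply, Pi.smul_apply, smul_eq_mul, Algebra.algebraMap_self, RingHom.id_apply]
  ring

theorem natDegree_restrictLine_le : (q.restrictLine p v).natDegree ≤ q.totalDegree := by
  simpa [restrictLine] using aeval_natDegree_le q le_rfl _ fun _ => natDegree_linear_le

theorem eval_derivative_restrictLine [Fintype σ] (t : K) :
    (derivative (q.restrictLine p v)).eval t = ∑ i, eval (p + t • v) (pderiv i q) * v i := by
  rw [restrictLine, derivative_aeval, Polynomial.eval_finsetSum]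
  refine Finset.sum_congr rfl fun i _ => ?_
  rw [Polynomial.eval_mul, ← restrictLine, eval_restrictLine]
  simp

theorem restrictLine_eq_zero_of_totalDegree_lt_card [IsDomain K] (T : Finset K)
    (hT : ∀ t ∈ T, eval (p + t • v) q = 0) (hcard : q.totalDegree < #T) :
    q.restrictLine p v = 0 :=
  eq_zero_of_natDegree_lt_card_of_eval_eq_zero' _ T
    (fun t ht => by rw [eval_restrictLine, hT t ht])
    ((natDegree_restrictLine_le q p v).trans_lt hcard)

end MvPolynomial

namespace Line

variable {n : ℕ}

theorem injective_param (ℓ : Line n) : Function.Injective fun t : ℝ => ℓ.p + t • ℓ.v :=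
  (add_right_injective ℓ.p).comp (smul_left_injective ℝ ℓ.hv)

theorem restrictLine_eq_zero_of_totalDegree_lt (ℓ : Line n) {q : MvPolynomial (Fin n) ℝ}
    {T : Finset (Fin n → ℝ)} (hT : ∀ x ∈ T, x ∈ ℓ.carrier ∧ eval x q = 0)
    (hcard : q.totalDegree < #T) : q.restrictLine ℓ.p ℓ.v = 0 := by
  classical
  refine restrictLine_eq_zero_of_totalDegree_lt_card q _ _ (T.preimage _ ℓ.injective_param.injOn)
    (fun t ht => (hT _ (mem_preimage.1 ht)).2) ?_
  rwa [card_preimage, filter_true_of_mem fun x hx => ?_]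
  obtain ⟨t, rfl⟩ := (hT x hx).1
  exact ⟨t, rfl⟩

theorem dotProduct_pderiv_eq_zero (ℓ : Line n) {q : MvPolynomial (Fin n) ℝ}
    (hq : q.restrictLine ℓ.p ℓ.v = 0) {x : Fin n → ℝ} (hx : x ∈ ℓ.carrier) :
    ℓ.v ⬝ᵥ (fun i => eval x (pderiv i q)) = 0 := by
  obtain ⟨t, rfl⟩ := hx
  have := eval_derivative_restrictLine q ℓ.p ℓ.v t
  rw [hq, derivative_zero, Polynomial.eval_zero] at this
  simp only [dotProduct, this, mul_comm]

theorem subsingleton_carrier_inter {ℓ₁ ℓ₂ : Line n}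
    (h : LinearIndependent ℝ ![ℓ₁.v, ℓ₂.v]) : (ℓ₁.carrier ∩ ℓ₂.carrier).Subsingleton := by
  rintro x ⟨⟨t, rfl⟩, s, hs⟩ y ⟨⟨t', rfl⟩, s', hs'⟩
  obtain ⟨htt', -⟩ := LinearIndependent.pair_iff.1 h (t - t') (s' - s)
    (by linear_combination (norm := module) hs - hs')
  rw [sub_eq_zero.1 htt']

end Line

theorem IsJoint.eval_pderiv_eq_zero {n : ℕ} {L : Finset (Line n)} {x : Fin n → ℝ}
    (hx : IsJoint L x) {q : MvPolynomial (Fin n) ℝ}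
    (hq : ∀ ℓ ∈ L, q.restrictLine ℓ.p ℓ.v = 0) (i : Fin n) : eval x (pderiv i q) = 0 := by
  obtain ⟨f, hfL, hxf, hli⟩ := hx
  let M : Matrix (Fin n) (Fin n) ℝ := Matrix.of fun j => (f j).v
  have hM : M.det ≠ 0 :=
    (M.isUnit_iff_isUnit_det.1 (Matrix.linearIndependent_rows_iff_isUnit.1 hli)).ne_zero
  exact congrFun (Matrix.eq_zero_of_mulVec_eq_zero hM
    (funext fun j => (f j).dotProduct_pderiv_eq_zero (hq _ (hfL j)) (hxf j))) i

theorem joints_finite {n : ℕ} (hn : 2 ≤ n) (L : Finset (Line n)) : (joints L).Finite := by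
  refine (L.finite_toSet.biUnion fun ℓ₁ _ =>
    (L.finite_toSet.inter_of_left {ℓ₂ | LinearIndependent ℝ ![ℓ₁.v, ℓ₂.v]}).biUnion
      fun ℓ₂ h => (Line.subsingleton_carrier_inter h.2).finite).subset ?_
  rintro x ⟨f, hfL, hxf, hli⟩
  let i : Fin n := ⟨0, by omega⟩
  let j : Fin n := ⟨1, by omega⟩
  have hij : i ≠ j := by simp [i, j, Fin.ext_iff]
  have hindep : LinearIndependent ℝ ![(f i).v, (f j).v] :=
    LinearIndependent.pair_iff.2 ((LinearIndepOn.pair_iff _ hij).1 (hli.linearIndepOn _))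
  exact Set.mem_biUnion (hfL i) (Set.mem_biUnion ⟨hfL j, hindep⟩ ⟨hxf i, hxf j⟩)

open scoped Classical

section Joints

variable {n : ℕ} {L : Finset (Line n)} {J : Finset (Fin n → ℝ)}

theorem eq_zero_of_forall_eval_joint_eq_zero (hJ : ∀ x ∈ J, IsJoint L x) (hJne : J.Nonempty) {D : ℕ}
    (hL : ∀ ℓ ∈ L, D < #{x ∈ J | x ∈ ℓ.carrier}) (q : MvPolynomial (Fin n) ℝ)
    (hD : q.totalDegree ≤ D) (hq : ∀ x ∈ J, eval x q = 0) : q = 0 := by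
  induction hd : q.totalDegree using Nat.strong_induction_on generalizing q with
  | _ d ih =>
  have hline : ∀ ℓ ∈ L, q.restrictLine ℓ.p ℓ.v = 0 := fun ℓ hℓ =>
    ℓ.restrictLine_eq_zero_of_totalDegree_lt
      (fun x hx => ⟨(mem_filter.1 hx).2, hq x (mem_filter.1 hx).1⟩) (hD.trans_lt (hL ℓ hℓ))
  have hpderiv : ∀ i, pderiv i q = 0 := fun i => by
    by_contra hi
    have hlt := totalDegree_pderiv_lt hi
    exact hi (ih _ (hd ▸ hlt) _ (hlt.le.trans hD)
      (fun x hx => (hJ x hx).eval_pderiv_eq_zero hline i) rfl)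
  obtain ⟨x, hx⟩ := hJne
  rw [totalDegree_eq_zero_iff_eq_C.1 (totalDegree_eq_zero_of_forall_pderiv_eq_zero hpderiv)]
    at hq ⊢
  simpa using hq x hx

theorem exists_line_card_inter_le (hJ : ∀ x ∈ J, IsJoint L x) (hJne : J.Nonempty) (k : ℕ)
    (hk : #J < (k + 1) ^ n) : ∃ ℓ ∈ L, #{x ∈ J | x ∈ ℓ.carrier} ≤ n * k := by
  by_contra! hL
  obtain ⟨q, hq0, hqJ, hdeg⟩ :=
    exists_ne_zero_totalDegree_le_of_card_lt J k (by simpa using hk)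
  exact hq0 (eq_zero_of_forall_eval_joint_eq_zero hJ hJne hL q (by simpa using hdeg) hqJ)

theorem exists_line_card_inter_le_rpow (hn : n ≠ 0) (hJ : ∀ x ∈ J, IsJoint L x)
    (hJne : J.Nonempty) :
    ∃ ℓ ∈ L, (#{x ∈ J | x ∈ ℓ.carrier} : ℝ) ≤ n * (#J : ℝ) ^ ((1 : ℝ) / n) := by
  set r := (#J : ℝ) ^ ((1 : ℝ) / n) with hr_def
  have hr : 0 ≤ r := by positivity
  have hk : (#J : ℝ) < (⌊r⌋₊ + 1 : ℝ) ^ n :=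
    calc (#J : ℝ) = r ^ n := by
          rw [hr_def, one_div, Real.rpow_inv_natCast_pow (by positivity) hn]
      _ < (⌊r⌋₊ + 1 : ℝ) ^ n := pow_lt_pow_left₀ (Nat.lt_floor_add_one r) hr hn
  obtain ⟨ℓ, hℓ, hcard⟩ := exists_line_card_inter_le hJ hJne ⌊r⌋₊ (by exact_mod_cast hk)
  refine ⟨ℓ, hℓ, ?_⟩
  calc (#{x ∈ J | x ∈ ℓ.carrier} : ℝ) ≤ n * ⌊r⌋₊ := by exact_mod_cast hcard
    _ ≤ n * r := by gcongr; exact Nat.floor_le hr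

theorem exists_coloring_card_le_rpow (hn : n ≠ 0) (L : Finset (Line n)) (J : Finset (Fin n → ℝ))
    (hJ : ∀ x ∈ J, IsJoint L x) :
    ∃ c : (Fin n → ℝ) → Line n, (∀ x ∈ J, c x ∈ L ∧ x ∈ (c x).carrier) ∧
      ∀ ℓ ∈ L, (#{x ∈ J | c x = ℓ} : ℝ) ≤ n * (#J : ℝ) ^ ((1 : ℝ) / n) := by
  induction L using Finset.strongInduction generalizing J with
  | H L ih =>
  rcases J.eq_empty_or_nonempty with rfl | hJne
  · exact ⟨fun _ => ⟨0, Pi.single ⟨0, by omega⟩ 1, by simp⟩, by simp,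
      fun ℓ _ => by simp only [filter_empty, card_empty, Nat.cast_zero]; positivity⟩
  obtain ⟨ℓ₀, hℓ₀, hℓ₀J⟩ := exists_line_card_inter_le_rpow hn hJ hJne
  set J' := {x ∈ J | x ∉ ℓ₀.carrier}
  obtain ⟨c, hcL, hc⟩ := ih (L.erase ℓ₀) (erase_ssubset hℓ₀) J' fun x hx => by
    obtain ⟨hxJ, hxℓ₀⟩ := mem_filter.1 hx
    obtain ⟨f, hfL, hxf, hli⟩ := hJ x hxJ
    exact ⟨f, fun i => mem_erase.2 ⟨fun h => hxℓ₀ (h ▸ hxf i), hfL i⟩, hxf, hli⟩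
  let c₀ : (Fin n → ℝ) → Line n := fun x => if x ∈ ℓ₀.carrier then ℓ₀ else c x
  refine ⟨c₀, fun x hx => ?_, fun ℓ hℓ => ?_⟩
  · by_cases hxℓ₀ : x ∈ ℓ₀.carrier
    · simpa [c₀, hxℓ₀] using hℓ₀
    · obtain ⟨hcx, hxc⟩ := hcL x (mem_filter.2 ⟨hx, hxℓ₀⟩)
      simpa [c₀, hxℓ₀] using ⟨mem_of_mem_erase hcx, hxc⟩
  rcases eq_or_ne ℓ ℓ₀ with rfl | hne
  · have hsub : {x ∈ J | c₀ x = ℓ} ⊆ {x ∈ J | x ∈ ℓ.carrier} := fun x hx => by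
      obtain ⟨hxJ, hcx⟩ := mem_filter.1 hx
      refine mem_filter.2 ⟨hxJ, by_contra fun hxℓ => ?_⟩
      simp only [c₀, if_neg hxℓ] at hcx
      exact notMem_erase ℓ L (hcx ▸ (hcL x (mem_filter.2 ⟨hxJ, hxℓ⟩)).1)
    exact le_trans (by exact_mod_cast card_le_card hsub) hℓ₀J
  · have hsub : {x ∈ J | c₀ x = ℓ} ⊆ {x ∈ J' | c x = ℓ} := fun x hx => by
      obtain ⟨hxJ, hcx⟩ := mem_filter.1 hx
      by_cases hxℓ₀ : x ∈ ℓ₀.carrier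
      · simp only [c₀, if_pos hxℓ₀] at hcx
        exact absurd hcx.symm hne
      · simp only [c₀, if_neg hxℓ₀] at hcx
        exact mem_filter.2 ⟨mem_filter.2 ⟨hxJ, hxℓ₀⟩, hcx⟩
    calc (#{x ∈ J | c₀ x = ℓ} : ℝ) ≤ #{x ∈ J' | c x = ℓ} := by
          exact_mod_cast card_le_card hsub
      _ ≤ n * (#J' : ℝ) ^ ((1 : ℝ) / n) := hc ℓ (mem_erase.2 ⟨hne, hℓ⟩)
      _ ≤ n * (#J : ℝ) ^ ((1 : ℝ) / n) := by gcongr; exact filter_subset _ _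

end Joints

theorem stmt_17 (n : ℕ) (hn : 2 ≤ n) :
    ∃ K : ℝ, 0 < K ∧
      ∀ L : Finset (Line n),
        ∃ c : (Fin n → ℝ) → Line n,
          (∀ x ∈ joints L, c x ∈ L ∧ x ∈ (c x).carrier) ∧
          ∀ ℓ ∈ L, (({x ∈ joints L | c x = ℓ}).ncard : ℝ) ≤
            K * ((joints L).ncard : ℝ) ^ ((1 : ℝ) / n) := by
  refine ⟨n, by positivity, fun L => ?_⟩
  have hfin := joints_finite hn L
  obtain ⟨c, hcL, hc⟩ := exists_coloring_card_le_rpow (by omega) L hfin.toFinset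
    fun x hx => hfin.mem_toFinset.1 hx
  refine ⟨c, fun x hx => hcL x (hfin.mem_toFinset.2 hx), fun ℓ hℓ => ?_⟩
  have hcolor : {x ∈ joints L | c x = ℓ} = ↑({x ∈ hfin.toFinset | c x = ℓ}) := by ext; simp
  rw [hcolor, Set.ncard_coe_finset, Set.ncard_eq_toFinset_card _ hfin]
  exact hc ℓ hℓ
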